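/- arXiv:2405.05867 — 2 statements merged into one kernel-verified Lean document; each statement's English description precedes it below -/
import Mathlib

section
/- Let α be a peak composition of n and let T be a standard immaculate tableau of shape α. Then T satisfies the peak-tableau condition if and only if the subfilling of T consisting of its first two columns is canonical, i.e. its entries strictly increase when read row by row from bottom to top and left to right within each row (equivalently, T_{1,j} < T_{2,j} whenever row j has at least two boxes, and T_{2,j} < T_{1,j+1} for every 1 ≤ j ≤ ℓ(α)−1). -/
/-!
The boxes of `T` with entries `≤ k` always form a composition diagram, since the rows and the
first column of `T` increase. That diagram is a peak one exactly when each of its rows below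
the top one has a second box. Taking `k = T (1, j + 1)` therefore forces `T (2, j) < T (1, j + 1)`;
conversely, these inequalities say that once the first box of row `j + 1` has entered the diagram,
so has the second box of row `j`.
-/

namespace PaperSPIT

/-- The `j`-th part (1-indexed) of a composition presented as a list. -/
def part (α : List ℕ) (j : ℕ) : ℕ := α.getD (j - 1) 0

/-- The largest part. -/
def maxPart (α : List ℕ) : ℕ := α.foldr max 0

/-- The composition diagram: boxes `(i, j)` (column `i`, row `j`), both 1-indexed,
rows numbered from bottom to top. -/
def cd (α : List ℕ) : Finset (ℕ × ℕ) :=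
  (Finset.Icc 1 (maxPart α) ×ˢ Finset.Icc 1 α.length).filter fun p => p.1 ≤ part α p.2

/-- `α` is a composition of `n`. -/
def IsComposition (n : ℕ) (α : List ℕ) : Prop :=
  (∀ a ∈ α, 0 < a) ∧ α.sum = n

/-- `α` is a peak composition of `n`: all parts except possibly the last are `> 1`. -/
def IsPeakComposition (n : ℕ) (α : List ℕ) : Prop :=
  IsComposition n α ∧ ∀ i, i + 1 < α.length → 1 < α.getD i 0

/-- A standard filling of `cd α`: a bijection from the boxes onto `{1, …, n}`
(normalized to be `0` off the diagram). -/
def IsStandardFilling (α : List ℕ) (T : ℕ × ℕ → ℕ) : Prop :=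
  Set.BijOn T (cd α : Set (ℕ × ℕ)) (Set.Icc 1 α.sum) ∧
  ∀ p : ℕ × ℕ, p ∉ cd α → T p = 0

def RowsIncrease (α : List ℕ) (T : ℕ × ℕ → ℕ) : Prop :=
  ∀ i j : ℕ, (i, j) ∈ cd α → (i + 1, j) ∈ cd α → T (i, j) < T (i + 1, j)

def RowsWeaklyIncrease (α : List ℕ) (T : ℕ × ℕ → ℕ) : Prop :=
  ∀ i j : ℕ, (i, j) ∈ cd α → (i + 1, j) ∈ cd α → T (i, j) ≤ T (i + 1, j)

def FirstColIncreases (α : List ℕ) (T : ℕ × ℕ → ℕ) : Prop :=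
  ∀ j : ℕ, (1, j) ∈ cd α → (1, j + 1) ∈ cd α → T (1, j) < T (1, j + 1)

/-- Standard immaculate tableau. -/
def IsSIT (α : List ℕ) (T : ℕ × ℕ → ℕ) : Prop :=
  IsStandardFilling α T ∧ RowsIncrease α T ∧ FirstColIncreases α T

/-- Peak-tableau condition: for every `1 ≤ k ≤ n` the boxes with entries `≤ k`
form the diagram of a peak composition. -/
def PeakCond (α : List ℕ) (T : ℕ × ℕ → ℕ) : Prop :=
  ∀ k : ℕ, 1 ≤ k → k ≤ α.sum → ∃ β : List ℕ,
    IsPeakComposition k β ∧ (cd α).filter (fun p => T p ≤ k) = cd β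

/-- Standard peak immaculate tableau. -/
def IsSPIT (α : List ℕ) (T : ℕ × ℕ → ℕ) : Prop := IsSIT α T ∧ PeakCond α T

def SPITset (α : List ℕ) : Set (ℕ × ℕ → ℕ) := {T | IsSPIT α T}

/-- The Young triple condition. -/
def YoungTriple (α : List ℕ) (T : ℕ × ℕ → ℕ) : Prop :=
  ∀ k i j : ℕ, i < j → (k, j) ∈ cd α → (k + 1, i) ∈ cd α → T (k, j) ≤ T (k + 1, i) →
    (k + 1, j) ∈ cd α ∧ T (k + 1, j) < T (k + 1, i)

/-- Standard Young composition tableau. -/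
def IsSYCT (α : List ℕ) (T : ℕ × ℕ → ℕ) : Prop :=
  IsStandardFilling α T ∧ RowsIncrease α T ∧ FirstColIncreases α T ∧ YoungTriple α T

def SYCTset (α : List ℕ) : Set (ℕ × ℕ → ℕ) := {T | IsSYCT α T}

/-- Standard peak Young composition tableau. -/
def IsSPYCT (α : List ℕ) (T : ℕ × ℕ → ℕ) : Prop := IsSYCT α T ∧ PeakCond α T

def SPYCTset (α : List ℕ) : Set (ℕ × ℕ → ℕ) := {T | IsSPYCT α T}

/-- Row reading word `w_r`: rows from top to bottom, each row left to right. -/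
def wR (α : List ℕ) (T : ℕ × ℕ → ℕ) : List ℕ :=
  ((List.range α.length).reverse.map fun j =>
    (List.range (part α (j + 1))).map fun i => T (i + 1, j + 1)).flatten

/-- The `i`-th column of a filling, read bottom to top. -/
def colList (α : List ℕ) (T : ℕ × ℕ → ℕ) (i : ℕ) : List ℕ :=
  ((List.range α.length).filter fun j => decide (i ≤ part α (j + 1))).map
    fun j => T (i, j + 1)

/-- Column reading word `w_c`: columns left to right, each column bottom to top. -/
def wC (α : List ℕ) (T : ℕ × ℕ → ℕ) : List ℕ :=
  ((List.range (maxPart α)).map fun i => colList α T (i + 1)).flatten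

/-- Young reading word `w_Y`: first column top to bottom, then subsequent columns
bottom to top, columns left to right. -/
def wY (α : List ℕ) (T : ℕ × ℕ → ℕ) : List ℕ :=
  (colList α T 1).reverse ++
    ((List.range (maxPart α - 1)).map fun i => colList α T (i + 2)).flatten

/-- Descent set of a word with distinct letters: `i` such that `i` and `i+1` occur
and `i` occurs to the right of `i+1`. -/
def DesWord (w : List ℕ) : Finset ℕ :=
  w.toFinset.filter fun i => (i + 1) ∈ w ∧ w.idxOf (i + 1) < w.idxOf i

section Diagram

variable {γ : List ℕ}

lemma mem_cd {i j : ℕ} :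
    (i, j) ∈ cd γ ↔ 1 ≤ i ∧ 1 ≤ j ∧ j ≤ γ.length ∧ i ≤ part γ j := by
  simp only [cd, Finset.mem_filter, Finset.mem_product, Finset.mem_Icc]
  refine ⟨fun ⟨⟨⟨hi, _⟩, hj, hjl⟩, hip⟩ => ⟨hi, hj, hjl, hip⟩,
    fun ⟨hi, hj, hjl, hip⟩ => ⟨⟨⟨hi, hip.trans ?_⟩, hj, hjl⟩, hip⟩⟩
  have hmem : part γ j ∈ γ := by
    rw [part, List.getD_eq_getElem _ _ (by omega)]
    exact List.getElem_mem _
  exact List.le_max_of_le' 0 hmem le_rfl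

lemma mem_cd_of_le {i i' j : ℕ} (h : (i, j) ∈ cd γ) (hi' : 1 ≤ i') (hle : i' ≤ i) :
    (i', j) ∈ cd γ := by
  rw [mem_cd] at h ⊢
  omega

lemma one_mem_cd (hpos : ∀ a ∈ γ, 0 < a) {j : ℕ} (hj : 1 ≤ j) (hjl : j ≤ γ.length) :
    (1, j) ∈ cd γ := by
  have := hpos (γ[j - 1]'(by omega)) (List.getElem_mem _)
  rw [mem_cd, part, List.getD_eq_getElem _ _ (by omega)]
  omega

lemma sum_range_getD (γ : List ℕ) : ∑ j ∈ Finset.range γ.length, γ.getD j 0 = γ.sum := by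
  rw [Finset.sum_range, ← Fin.sum_univ_getElem]
  simp

lemma card_cd (γ : List ℕ) : (cd γ).card = γ.sum := by
  have hmaps : Set.MapsTo (fun p : ℕ × ℕ => p.2 - 1) (cd γ) (Finset.range γ.length) := by
    rintro ⟨a, b⟩ hp
    have := mem_cd.1 hp
    simp only [Finset.coe_range, Set.mem_Iio]
    omega
  rw [Finset.card_eq_sum_card_fiberwise hmaps, ← sum_range_getD]
  refine Finset.sum_congr rfl fun j hj => ?_
  have hrow : (cd γ).filter (fun p => p.2 - 1 = j) = Finset.Icc 1 (γ.getD j 0) ×ˢ {j + 1} := by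
    ext ⟨a, b⟩
    simp only [Finset.mem_filter, mem_cd, part, Finset.mem_product, Finset.mem_Icc,
      Finset.mem_singleton]
    simp only [Finset.mem_range] at hj
    constructor
    · rintro ⟨⟨ha, hb, -, hab⟩, rfl⟩
      exact ⟨⟨ha, hab⟩, by omega⟩
    · rintro ⟨⟨ha, hab⟩, rfl⟩
      exact ⟨⟨ha, by omega, by omega, hab⟩, rfl⟩
  simp [hrow]

lemma peak_iff_two_mem_cd (hpos : ∀ a ∈ γ, 0 < a) :
    (∀ i, i + 1 < γ.length → 1 < γ.getD i 0) ↔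
      ∀ j, 1 ≤ j → (1, j + 1) ∈ cd γ → (2, j) ∈ cd γ := by
  constructor
  · intro hpeak j hj h1
    have hjl := (mem_cd.1 h1).2.2.1
    have := hpeak (j - 1) (by omega)
    rw [mem_cd, part]
    omega
  · intro h i hi
    have := mem_cd.1 (h (i + 1) (by omega) (one_mem_cd hpos (by omega) hi))
    simp only [part, Nat.add_sub_cancel] at this
    omega

end Diagram

lemma exists_mem_eq_sup_of_pos {ι : Type*} {s : Finset ι} {f : ι → ℕ} (h : 0 < s.sup f) :
    ∃ p ∈ s, f p = s.sup f := by
  obtain ⟨p, hp, hfp⟩ := s.exists_mem_eq_sup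
    (Finset.nonempty_iff_ne_empty.2 (by rintro rfl; simp at h)) f
  exact ⟨p, hp, hfp.symm⟩

structure IsCompositionDiagram (S : Finset (ℕ × ℕ)) : Prop where
  one_le : ∀ p ∈ S, 1 ≤ p.1 ∧ 1 ≤ p.2
  mem_of_le_fst : ∀ i i' j, 1 ≤ i' → i' ≤ i → (i, j) ∈ S → (i', j) ∈ S
  one_mem_of_le_snd : ∀ j j', 1 ≤ j' → j' ≤ j → (1, j) ∈ S → (1, j') ∈ S

def rowLength (S : Finset (ℕ × ℕ)) (j : ℕ) : ℕ := (S.filter fun p => p.2 = j).sup Prod.fst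

namespace IsCompositionDiagram

variable {S : Finset (ℕ × ℕ)}

lemma mem_iff_le_rowLength (hS : IsCompositionDiagram S) {i : ℕ} (j : ℕ) (hi : 1 ≤ i) :
    (i, j) ∈ S ↔ i ≤ rowLength S j := by
  have hrow : ∀ {p}, p ∈ S.filter (fun p => p.2 = j) ↔ p ∈ S ∧ p.2 = j := Finset.mem_filter
  refine ⟨fun h => Finset.le_sup (f := Prod.fst) (hrow.2 ⟨h, rfl⟩), fun h => ?_⟩
  obtain ⟨⟨a, b⟩, hp, ha⟩ := exists_mem_eq_sup_of_pos (show 0 < rowLength S j by omega)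
  obtain ⟨hpS, rfl : b = j⟩ := hrow.1 hp
  exact hS.mem_of_le_fst a i b hi (h.trans ha.ge) hpS

lemma one_mem_iff_le_sup_snd (hS : IsCompositionDiagram S) {j : ℕ} (hj : 1 ≤ j) :
    (1, j) ∈ S ↔ j ≤ S.sup Prod.snd := by
  refine ⟨fun h => Finset.le_sup (f := Prod.snd) h, fun h => ?_⟩
  obtain ⟨⟨a, b⟩, hp, hb⟩ := exists_mem_eq_sup_of_pos (s := S) (f := Prod.snd) (by omega)
  dsimp only at hb
  exact hS.one_mem_of_le_snd b j hj (by omega)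
    (hS.mem_of_le_fst a 1 b le_rfl (hS.one_le _ hp).1 hp)

lemma exists_eq_cd (hS : IsCompositionDiagram S) :
    ∃ β : List ℕ, (∀ a ∈ β, 0 < a) ∧ S = cd β := by
  set β := (List.range (S.sup Prod.snd)).map fun j => rowLength S (j + 1)
  have hpart : ∀ j, 1 ≤ j → j ≤ S.sup Prod.snd → β.getD (j - 1) 0 = rowLength S j := by
    intro j hj hjm
    rw [List.getD_eq_getElem _ _ (by rw [List.length_map, List.length_range]; omega),
      List.getElem_map, List.getElem_range, Nat.sub_add_cancel hj]
  refine ⟨β, ?_, ?_⟩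
  · simp only [β, List.mem_map, List.mem_range]
    rintro _ ⟨j, hj, rfl⟩
    exact (hS.mem_iff_le_rowLength (j + 1) le_rfl).1
      ((hS.one_mem_iff_le_sup_snd (by omega)).2 hj)
  · ext ⟨i, j⟩
    simp only [mem_cd, part, β, List.length_map, List.length_range]
    constructor
    · intro h
      obtain ⟨hi, hj⟩ := hS.one_le _ h
      have hjm := (hS.one_mem_iff_le_sup_snd hj).1 (hS.mem_of_le_fst i 1 j le_rfl hi h)
      rw [hpart j hj hjm]
      exact ⟨hi, hj, hjm, (hS.mem_iff_le_rowLength j hi).1 h⟩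
    · rintro ⟨hi, hj, hjm, hir⟩
      rw [hpart j hj hjm] at hir
      exact (hS.mem_iff_le_rowLength j hi).2 hir

end IsCompositionDiagram

section Tableau

variable {α : List ℕ} {T : ℕ × ℕ → ℕ}

lemma RowsIncrease.le_of_le (h : RowsIncrease α T) {i i' j : ℕ} (h' : (i', j) ∈ cd α)
    (hi : 1 ≤ i) (hle : i ≤ i') : T (i, j) ≤ T (i', j) := by
  induction hle with
  | refl => exact le_rfl
  | step hle ih =>
    have hmem := mem_cd_of_le h' (hi.trans hle) (Nat.le_succ _)
    exact (ih hmem).trans (h _ j hmem h').le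

lemma FirstColIncreases.le_of_le (hpos : ∀ a ∈ α, 0 < a) (h : FirstColIncreases α T)
    {j j' : ℕ} (hj : 1 ≤ j) (hle : j ≤ j') (hj' : j' ≤ α.length) : T (1, j) ≤ T (1, j') := by
  induction hle with
  | refl => exact le_rfl
  | step hle ih =>
    exact (ih (by omega)).trans
      (h _ (one_mem_cd hpos (hj.trans hle) (by omega)) (one_mem_cd hpos (by omega) hj')).le

lemma isCompositionDiagram_filter_le (hpos : ∀ a ∈ α, 0 < a) (hrow : RowsIncrease α T)
    (hcol : FirstColIncreases α T) (k : ℕ) :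
    IsCompositionDiagram ((cd α).filter (T · ≤ k)) where
  one_le p hp := by
    have := mem_cd.1 (Finset.mem_filter.1 hp).1
    exact ⟨this.1, this.2.1⟩
  mem_of_le_fst i i' j hi' hle hp := by
    obtain ⟨hp, hk⟩ := Finset.mem_filter.1 hp
    exact Finset.mem_filter.2 ⟨mem_cd_of_le hp hi' hle, (hrow.le_of_le hp hi' hle).trans hk⟩
  one_mem_of_le_snd j j' hj' hle hp := by
    obtain ⟨hp, hk⟩ := Finset.mem_filter.1 hp
    have hjl := (mem_cd.1 hp).2.2.1
    exact Finset.mem_filter.2 ⟨one_mem_cd hpos hj' (hle.trans hjl),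
      (hcol.le_of_le hpos hj' hle hjl).trans hk⟩

lemma card_filter_le_of_bijOn {ι : Type*} {s : Finset ι} {f : ι → ℕ} {n k : ℕ}
    (hf : Set.BijOn f s (Set.Icc 1 n)) (hk : k ≤ n) : (s.filter (f · ≤ k)).card = k := by
  rw [Finset.card_nbij f (t := Finset.Icc 1 k)]
  · simp
  · intro p hp
    obtain ⟨hp, hpk⟩ := Finset.mem_filter.1 hp
    exact Finset.mem_Icc.2 ⟨(hf.mapsTo hp).1, hpk⟩
  · exact hf.injOn.mono fun p hp => (Finset.mem_filter.1 hp).1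
  · intro v hv
    obtain ⟨hv1, hvk⟩ := Finset.mem_Icc.1 hv
    obtain ⟨p, hp, rfl⟩ := hf.surjOn ⟨hv1, hvk.trans hk⟩
    exact ⟨p, Finset.mem_filter.2 ⟨hp, hvk⟩, rfl⟩

lemma PeakCond.apply_two_lt_apply_one_succ (hP : PeakCond α T) (hpos : ∀ a ∈ α, 0 < a)
    (hpeak : ∀ i, i + 1 < α.length → 1 < α.getD i 0)
    (hbij : Set.BijOn T (cd α : Set (ℕ × ℕ)) (Set.Icc 1 α.sum)) {j : ℕ} (hj : 1 ≤ j)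
    (hjl : j + 1 ≤ α.length) :
    T (2, j) < T (1, j + 1) := by
  have h1 := one_mem_cd hpos (by omega) hjl
  have h2 := (peak_iff_two_mem_cd hpos).1 hpeak j hj h1
  obtain ⟨hk1, hkn⟩ := hbij.mapsTo h1
  obtain ⟨β, ⟨⟨hβpos, -⟩, hβpeak⟩, hβ⟩ := hP _ hk1 hkn
  have h2β : (2, j) ∈ cd β := (peak_iff_two_mem_cd hβpos).1 hβpeak j hj
    (hβ ▸ Finset.mem_filter.2 ⟨h1, le_rfl⟩)
  rw [← hβ, Finset.mem_filter] at h2β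
  exact h2β.2.lt_of_ne fun h => by simpa using hbij.injOn h2 h1 h

lemma peakCond_of_apply_two_lt_apply_one_succ (hpos : ∀ a ∈ α, 0 < a)
    (hpeak : ∀ i, i + 1 < α.length → 1 < α.getD i 0)
    (hbij : Set.BijOn T (cd α : Set (ℕ × ℕ)) (Set.Icc 1 α.sum)) (hrow : RowsIncrease α T)
    (hcol : FirstColIncreases α T)
    (hlt : ∀ j, 1 ≤ j → j + 1 ≤ α.length → T (2, j) < T (1, j + 1)) : PeakCond α T := by
  intro k _ hkn
  obtain ⟨β, hβpos, hβ⟩ := (isCompositionDiagram_filter_le hpos hrow hcol k).exists_eq_cd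
  refine ⟨β, ⟨⟨hβpos, ?_⟩, (peak_iff_two_mem_cd hβpos).2 fun j hj h1 => ?_⟩, hβ⟩
  · rw [← card_cd, ← hβ, card_filter_le_of_bijOn hbij hkn]
  · rw [← hβ, Finset.mem_filter] at h1 ⊢
    exact ⟨(peak_iff_two_mem_cd hpos).1 hpeak j hj h1.1,
      (hlt j hj (mem_cd.1 h1.1).2.2.1).le.trans h1.2⟩

end Tableau

/-- For a peak composition `α` of `n` and a standard immaculate tableau `T`
of shape `α`, the peak-tableau condition holds iff the first two columns of `T` are canonical:
`T (1,j) < T (2,j)` whenever row `j` has at least two boxes, and `T (2,j) < T (1,j+1)` for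
every `1 ≤ j ≤ ℓ(α) − 1`. -/
theorem peakCond_iff_canonical (n : ℕ) (α : List ℕ) (hα : IsPeakComposition n α)
    (T : ℕ × ℕ → ℕ) (hT : IsSIT α T) :
    PeakCond α T ↔
      ((∀ j : ℕ, (2, j) ∈ cd α → T (1, j) < T (2, j)) ∧
       (∀ j : ℕ, 1 ≤ j → j + 1 ≤ α.length → T (2, j) < T (1, j + 1))) := by
  obtain ⟨⟨hpos, -⟩, hpeak⟩ := hα
  obtain ⟨⟨hbij, -⟩, hrow, hcol⟩ := hT
  refine ⟨fun hP => ⟨fun j h2 => ?_, fun j => hP.apply_two_lt_apply_one_succ hpos hpeak hbij⟩,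
    fun ⟨_, hlt⟩ => peakCond_of_apply_two_lt_apply_one_succ hpos hpeak hbij hrow hcol hlt⟩
  exact hrow 1 j (mem_cd_of_le h2 le_rfl one_le_two) h2

end PaperSPIT
end

section
/- For every peak composition α of n, the quasisymmetric Schur Q-function satisfies QSQ_α = Σ_{T ∈ SPIT(α)} K_{comp(Peak(Des(w_r(T))))} (an identity of formal power series); that is, QSQ_α is also equal to the K-generating function of standard peak immaculate tableaux computed with the row reading word w_r in place of the column reading word w_c. -/
namespace PaperSPIT

def setComp (α : List ℕ) : Finset ℕ :=
  (((α.scanl (· + ·) 0).drop 1).dropLast).toFinset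

def compOf (n : ℕ) (I : Finset ℕ) : List ℕ :=
  List.zipWith (fun a b => a - b) (I.sort (· ≤ ·) ++ [n]) (0 :: I.sort (· ≤ ·))

def PeakSet (X : Finset ℕ) : Finset ℕ := X.filter fun i => 1 < i ∧ i - 1 ∉ X

noncomputable def Fqs (n : ℕ) (α : List ℕ) : MvPowerSeries ℕ ℤ := fun d =>
  (Set.ncard {f : Fin n → ℕ |
      (∀ j, 1 ≤ f j) ∧ Monotone f ∧
      (∀ j k : Fin n, (k : ℕ) = (j : ℕ) + 1 → ((j : ℕ) + 1) ∈ setComp α → f j < f k) ∧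
      ∀ m : ℕ, d m = (Finset.univ.filter fun j : Fin n => f j = m).card} : ℤ)

noncomputable def Kqs (n : ℕ) (α : List ℕ) : MvPowerSeries ℕ ℤ :=
  (2 ^ ((setComp α).card + 1) : ℕ) •
    ∑ β : Composition n,
      if setComp α ⊆ symmDiff (setComp β.blocks) ((setComp β.blocks).image (· + 1))
      then Fqs n β.blocks else 0

/-- The quasisymmetric Schur `Q`-function of a peak composition `α` of `n`. -/
noncomputable def QSQ (n : ℕ) (α : List ℕ) : MvPowerSeries ℕ ℤ :=
  ∑ᶠ T ∈ SPITset α, Kqs n (compOf n (PeakSet (DesWord (wC α T))))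

/-- The peak Young quasisymmetric Schur function of a peak composition `α` of `n`. -/
noncomputable def PYQS (n : ℕ) (α : List ℕ) : MvPowerSeries ℕ ℤ :=
  ∑ᶠ T ∈ SPYCTset α, Kqs n (compOf n (PeakSet (DesWord (wY α T))))


/-!
Standard peak immaculate tableaux of a peak composition `α` are exactly the linear extensions of
the poset on `cd α` generated by the row steps `(c, r) < (c + 1, r)` and the steps
`(2, r) < (1, r + 1)`. Both the column and the row reading order agree with every row step and
reverse every step `(2, r) < (1, r + 1)`. By Stanley's theory of `P`-partitions, the number of
linear extensions whose descent set for a reading order lies in `D` only depends on which edges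
that order reverses; by Möbius inversion, the two reading words give equidistributed descent sets,
so every function of the descent set, in particular `K_{comp(Peak(Des))}`, has the same sum.
-/

open Finset

/-- Both are the sorted list of the common multiset of values. -/
lemma eqOn_Icc_of_map_val_eq {u v : ℕ → ℕ} {n : ℕ} (hu : MonotoneOn u (Set.Icc 1 n))
    (hv : MonotoneOn v (Set.Icc 1 n)) (h : (Icc 1 n).val.map u = (Icc 1 n).val.map v) :
    Set.EqOn u v (Set.Icc 1 n) := by
  have hsorted : ∀ w : ℕ → ℕ, MonotoneOn w (Set.Icc 1 n) →
      ((List.range' 1 n).map w).Pairwise (· ≤ ·) := fun w hw =>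
    List.pairwise_map.2 <| (List.pairwise_lt_range' (s := 1) (n := n)).imp_of_mem
      fun ha hb hab => by
        rw [List.mem_range'_1] at ha hb
        exact hw ⟨ha.1, by omega⟩ ⟨hb.1, by omega⟩ hab.le
  rw [Nat.Icc_eq_range', Nat.add_sub_cancel] at h
  have heq := List.Perm.eq_of_pairwise' (hsorted u hu) (hsorted v hv) (Multiset.coe_eq_coe.1 h)
  intro k hk
  exact List.map_inj_left.1 heq k (List.mem_range'_1.2 ⟨hk.1, Nat.lt_one_add_iff.2 hk.2⟩)

lemma injOn_toLex_pair {β δ : Type*} {S : Set β} {f : β → ℕ} {κ : β → δ} (hκ : Set.InjOn κ S) :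
    Set.InjOn (fun p => toLex (f p, κ p)) S :=
  fun _ hp _ hq he => hκ hp hq (congrArg Prod.snd (toLex.injective he))

section Standardization

variable {β δ : Type*} [LinearOrder δ]

def IsStandardLabeling (S : Finset β) (T : β → ℕ) : Prop :=
  Set.BijOn T S (Set.Icc 1 #S) ∧ ∀ p ∉ S, T p = 0

variable {S : Finset β} {T : β → ℕ}

lemma IsStandardLabeling.card_filter_le (hT : IsStandardLabeling S T) {k : ℕ} (hk : k ≤ #S) :
    #{p ∈ S | T p ≤ k} = k := by
  have himage : image T {p ∈ S | T p ≤ k} = Icc 1 k := by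
    ext i
    simp only [mem_image, mem_filter, mem_Icc]
    constructor
    · rintro ⟨p, ⟨hp, hle⟩, rfl⟩
      exact ⟨(hT.1.mapsTo hp).1, hle⟩
    · rintro ⟨h1, h2⟩
      obtain ⟨p, hp, rfl⟩ := hT.1.surjOn ⟨h1, h2.trans hk⟩
      exact ⟨p, ⟨hp, h2⟩, rfl⟩
  rw [← card_image_of_injOn (hT.1.injOn.mono fun p hp => (mem_filter.1 hp).1), himage,
    Nat.card_Icc, Nat.add_sub_cancel]

lemma IsStandardLabeling.map_val (hT : IsStandardLabeling S T) :
    S.val.map T = (Icc 1 #S).val := by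
  rw [← image_val_of_injOn hT.1.injOn]
  congr 1
  exact coe_injective (by simpa using hT.1.image_eq)

lemma IsStandardLabeling.eq_comp_of_map_val_eq (hT : IsStandardLabeling S T) {f : β → ℕ} {v : ℕ → ℕ}
    (hf : ∀ p ∈ S, ∀ q ∈ S, T p < T q → f p ≤ f q) (hv : Monotone v)
    (hmap : S.val.map f = (Icc 1 #S).val.map v) {p : β} (hp : p ∈ S) : f p = v (T p) := by
  have : Nonempty β := ⟨p⟩
  have hu : ∀ p ∈ S, (f ∘ Function.invFunOn T S) (T p) = f p := fun p hp =>
    congrArg f (hT.1.injOn.leftInvOn_invFunOn hp)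
  have hsurj := hT.1.surjOn.rightInvOn_invFunOn
  have hmaps := hT.1.surjOn.mapsTo_invFunOn
  refine (hu p hp).symm.trans (eqOn_Icc_of_map_val_eq ?_ (hv.monotoneOn _) ?_ (hT.1.mapsTo hp))
  · intro a ha b hb hab
    rcases hab.lt_or_eq with hlt | rfl
    · exact hf _ (hmaps ha) _ (hmaps hb) (by rwa [hsurj ha, hsurj hb])
    · exact le_rfl
  · rw [← hmap, ← hT.map_val, Multiset.map_map]
    exact Multiset.map_congr rfl hu

variable [DecidableEq β] {g : β → δ} {p q : β}

def standardize (S : Finset β) (g : β → δ) (p : β) : ℕ :=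
  if p ∈ S then #{q ∈ S | g q ≤ g p} else 0

lemma standardize_le_standardize (hp : p ∈ S) (hq : q ∈ S) (h : g p ≤ g q) :
    standardize S g p ≤ standardize S g q := by
  simp only [standardize, if_pos hp, if_pos hq]
  exact card_le_card fun x hx => by
    simp only [mem_filter] at hx ⊢
    exact ⟨hx.1, hx.2.trans h⟩

lemma standardize_lt_standardize (hp : p ∈ S) (hq : q ∈ S) (h : g p < g q) :
    standardize S g p < standardize S g q := by
  simp only [standardize, if_pos hp, if_pos hq]
  refine card_lt_card ⟨fun x hx => ?_, fun hsub => ?_⟩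
  · simp only [mem_filter] at hx ⊢
    exact ⟨hx.1, hx.2.trans h.le⟩
  · have := (mem_filter.1 (hsub (mem_filter.2 ⟨hq, le_rfl⟩))).2
    exact absurd h (not_lt.2 this)

lemma lt_of_standardize_lt (hp : p ∈ S) (hq : q ∈ S)
    (h : standardize S g p < standardize S g q) : g p < g q :=
  lt_of_not_ge fun hle => (standardize_le_standardize hq hp hle).not_gt h

lemma isStandardLabeling_standardize (hg : Set.InjOn g S) :
    IsStandardLabeling S (standardize S g) := by
  have hinj : Set.InjOn (standardize S g) S := by
    intro p hp q hq he
    by_contra hne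
    rcases lt_or_gt_of_ne (mt (hg hp hq) hne) with h | h
    · exact (standardize_lt_standardize hp hq h).ne he
    · exact (standardize_lt_standardize hq hp h).ne' he
  have hmaps : Set.MapsTo (standardize S g) S (Icc 1 #S : Finset ℕ) := by
    intro p hp
    simp only [coe_Icc, Set.mem_Icc, standardize, if_pos (mem_coe.1 hp)]
    exact ⟨card_pos.2 ⟨p, mem_filter.2 ⟨hp, le_rfl⟩⟩, card_filter_le _ _⟩
  refine ⟨⟨?_, hinj, ?_⟩, fun p hp => if_neg hp⟩
  · simpa using hmaps
  · simpa using surjOn_of_injOn_of_card_le _ hmaps hinj (by simp)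

lemma IsStandardLabeling.eq_standardize (hT : IsStandardLabeling S T)
    (h : ∀ p ∈ S, ∀ q ∈ S, T p < T q → g p < g q) : T = standardize S g := by
  funext p
  by_cases hp : p ∈ S
  · have hiff : ∀ q ∈ S, g q ≤ g p ↔ T q ≤ T p := fun q hq =>
      ⟨fun hle => not_lt.1 fun hlt => (h p hp q hq hlt).not_ge hle,
        fun hle => hle.lt_or_eq.elim (fun hlt => (h q hq p hp hlt).le)
          fun he => (hT.1.injOn hq hp he) ▸ le_rfl⟩
    rw [standardize, if_pos hp, filter_congr hiff, hT.card_filter_le (hT.1.mapsTo hp).2]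
  · rw [hT.2 p hp, standardize, if_neg hp]

end Standardization

section PPartitions

variable {β δ : Type*} [LinearOrder δ]

/-- `Des` of the word listing the labels of `T` in increasing `κ`-order. -/
def descents (S : Finset β) (κ : β → δ) (T : β → ℕ) : Finset ℕ :=
  image T {p ∈ S | ∃ q ∈ S, T q = T p + 1 ∧ κ q < κ p}

/-- The index of the block containing `k` when `{1, 2, …}` is cut after each element of `D`. -/
def blockOf (D : Finset ℕ) (k : ℕ) : ℕ := #{d ∈ D | d < k}

lemma blockOf_zero (D : Finset ℕ) : blockOf D 0 = 0 := by simp [blockOf]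

lemma blockOf_mono (D : Finset ℕ) : Monotone (blockOf D) := fun _ _ h =>
  card_le_card fun d hd => by
    simp only [mem_filter] at hd ⊢
    exact ⟨hd.1, hd.2.trans_le h⟩

lemma blockOf_lt_blockOf {D : Finset ℕ} {a b d : ℕ} (hd : d ∈ D) (ha : a ≤ d) (hb : d < b) :
    blockOf D a < blockOf D b := by
  refine card_lt_card ⟨fun x hx => ?_, fun hsub => ?_⟩
  · simp only [mem_filter] at hx ⊢
    exact ⟨hx.1, by omega⟩
  · have := (mem_filter.1 (hsub (mem_filter.2 ⟨hd, hb⟩))).2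
    omega

def linearExtensions (S : Finset β) (E : β → β → Prop) : Set (β → ℕ) :=
  {T | IsStandardLabeling S T ∧ ∀ p ∈ S, ∀ q ∈ S, E p q → T p < T q}

/-- `(E, κ)`-partitions, weakly increasing along the edges of `E` that `κ` orders the same way
and strictly along the others, whose multiset of values is that of `blockOf D` on `{1, …, #S}`. -/
def partitions (S : Finset β) (E : β → β → Prop) (κ : β → δ) (D : Finset ℕ) : Set (β → ℕ) :=
  {f | (∀ p ∉ S, f p = 0) ∧
    (∀ p ∈ S, ∀ q ∈ S, E p q → toLex (f p, κ p) < toLex (f q, κ q)) ∧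
    S.val.map f = (Icc 1 #S).val.map (blockOf D)}

variable {S : Finset β} {E : β → β → Prop} {κ : β → δ} {D : Finset ℕ} {T f : β → ℕ}

lemma partitions_congr {δ' : Type*} [LinearOrder δ'] {κ' : β → δ'}
    (h : ∀ p ∈ S, ∀ q ∈ S, E p q → (κ p < κ q ↔ κ' p < κ' q)) :
    partitions S E κ D = partitions S E κ' D := by
  ext f
  simp only [partitions, Prod.Lex.toLex_lt_toLex]
  refine and_congr_right fun _ => and_congr_left fun _ => ?_
  exact forall₂_congr fun p hp => forall₂_congr fun q hq => imp_congr_right fun hE => by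
    rw [h p hp q hq hE]

lemma blockOf_succ_of_notMem {k : ℕ} (hk : k ∉ D) : blockOf D (k + 1) = blockOf D k :=
  congrArg card <| filter_congr fun d hd => by
    have : d ≠ k := fun h => hk (h ▸ hd)
    omega

lemma lt_of_succ_notMem_descents (hκ : Set.InjOn κ S) (hD : descents S κ T ⊆ D) {p q : β}
    (hp : p ∈ S) (hq : q ∈ S) (hpq : T q = T p + 1) (hnot : T p ∉ D) : κ p < κ q := by
  refine lt_of_le_of_ne (not_lt.1 fun hlt => hnot (hD ?_)) fun he => ?_
  · exact mem_image_of_mem T (mem_filter.2 ⟨hp, q, hq, hpq, hlt⟩)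
  · rw [hκ hp hq he] at hpq
    omega

lemma IsStandardLabeling.lt_of_blockOf_eq (hT : IsStandardLabeling S T) (hκ : Set.InjOn κ S)
    (hD : descents S κ T ⊆ D) {p q : β} (hp : p ∈ S) (hq : q ∈ S) (hlt : T p < T q)
    (hblk : blockOf D (T p) = blockOf D (T q)) : κ p < κ q := by
  suffices ∀ k, T p + 1 ≤ k → ∀ q ∈ S, T q = k → blockOf D k = blockOf D (T p) → κ p < κ q from
    this _ hlt q hq rfl hblk.symm
  intro k hk
  induction k, hk using Nat.le_induction with
  | base =>
    intro q hq hTq hb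
    refine lt_of_succ_notMem_descents hκ hD hp hq hTq fun hd => ?_
    exact (blockOf_lt_blockOf hd le_rfl (Nat.lt_succ_self _)).ne' hb
  | succ k hk ih =>
    intro q hq hTq hb
    obtain ⟨q', hq', hTq'⟩ : ∃ q' ∈ S, T q' = k :=
      hT.1.surjOn ⟨by omega, by have := (hT.1.mapsTo hq).2; omega⟩
    have hbk : blockOf D k = blockOf D (T p) :=
      le_antisymm (hb ▸ blockOf_mono D k.le_succ) (blockOf_mono D (by omega))
    have hkD : k ∉ D := fun hd =>
      (blockOf_lt_blockOf hd le_rfl (Nat.lt_succ_self k)).ne' (hb.trans hbk.symm)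
    exact (ih q' hq' hTq' hbk).trans
      (lt_of_succ_notMem_descents hκ hD hq' hq (by omega) (hTq' ▸ hkD))

lemma IsStandardLabeling.toLex_blockOf_lt (hT : IsStandardLabeling S T) (hκ : Set.InjOn κ S)
    (hD : descents S κ T ⊆ D) {p q : β} (hp : p ∈ S) (hq : q ∈ S) (hlt : T p < T q) :
    toLex (blockOf D (T p), κ p) < toLex (blockOf D (T q), κ q) := by
  rw [Prod.Lex.toLex_lt_toLex]
  rcases (blockOf_mono D hlt.le).lt_or_eq with h | h
  · exact Or.inl h
  · exact Or.inr ⟨h, hT.lt_of_blockOf_eq hκ hD hp hq hlt h⟩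

lemma blockOf_comp_mem_partitions (hT : T ∈ linearExtensions S E) (hκ : Set.InjOn κ S)
    (hD : descents S κ T ⊆ D) : blockOf D ∘ T ∈ partitions S E κ D := by
  refine ⟨fun p hp => ?_, fun p hp q hq hE => ?_, ?_⟩
  · rw [Function.comp_apply, hT.1.2 p hp, blockOf_zero]
  · exact hT.1.toLex_blockOf_lt hκ hD hp hq (hT.2 p hp q hq hE)
  · rw [← Multiset.map_map, hT.1.map_val]

variable [DecidableEq β]

lemma blockOf_standardize (hf : f ∈ partitions S E κ D) (hκ : Set.InjOn κ S) {p : β}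
    (hp : p ∈ S) : blockOf D (standardize S (fun p => toLex (f p, κ p)) p) = f p := by
  refine ((isStandardLabeling_standardize (injOn_toLex_pair hκ)).eq_comp_of_map_val_eq
    (fun _ hp _ hq hlt => ?_) (blockOf_mono D) hf.2.2 hp).symm
  have := lt_of_standardize_lt hp hq hlt
  rw [Prod.Lex.toLex_lt_toLex] at this
  rcases this with h | h
  exacts [h.le, h.1.le]

lemma standardize_mem_linearExtensions (hf : f ∈ partitions S E κ D) (hκ : Set.InjOn κ S) :
    standardize S (fun p => toLex (f p, κ p)) ∈ linearExtensions S E :=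
  ⟨isStandardLabeling_standardize (injOn_toLex_pair hκ),
    fun p hp q hq hE => standardize_lt_standardize hp hq (hf.2.1 p hp q hq hE)⟩

lemma descents_standardize_subset (hf : f ∈ partitions S E κ D) (hκ : Set.InjOn κ S) :
    descents S κ (standardize S (fun p => toLex (f p, κ p))) ⊆ D := by
  intro i hi
  obtain ⟨p, hp', rfl⟩ := mem_image.1 hi
  obtain ⟨hp, q, hq, hsucc, hlt⟩ := mem_filter.1 hp'
  by_contra hnot
  have hfpq : f p = f q := by
    rw [← blockOf_standardize hf hκ hp, ← blockOf_standardize hf hκ hq, hsucc,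
      blockOf_succ_of_notMem hnot]
  have := lt_of_standardize_lt (g := fun p => toLex (f p, κ p)) hp hq (by omega)
  rw [Prod.Lex.toLex_lt_toLex] at this
  rcases this with h | h
  · exact h.ne hfpq
  · exact h.2.not_gt hlt

/-- The `P`-partition bijection `T ↦ blockOf D ∘ T`, inverted by standardization. -/
theorem ncard_descents_subset_eq (hκ : Set.InjOn κ S) (D : Finset ℕ) :
    {T ∈ linearExtensions S E | descents S κ T ⊆ D}.ncard = (partitions S E κ D).ncard := by
  refine Set.BijOn.ncard_eq (f := (blockOf D ∘ ·)) (Set.InvOn.bijOn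
    (f' := fun f => standardize S (fun p => toLex (f p, κ p))) ⟨?_, ?_⟩ ?_ ?_)
  · rintro T ⟨hT, hD⟩
    exact (hT.1.eq_standardize fun p hp q hq => hT.1.toLex_blockOf_lt hκ hD hp hq).symm
  · intro f hf
    funext p
    by_cases hp : p ∈ S
    · exact blockOf_standardize hf hκ hp
    · simp only [Function.comp_apply, standardize, if_neg hp, blockOf_zero, hf.1 p hp]
  · rintro T ⟨hT, hD⟩
    exact blockOf_comp_mem_partitions hT hκ hD
  · intro f hf
    exact ⟨standardize_mem_linearExtensions hf hκ, descents_standardize_subset hf hκ⟩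

lemma linearExtensions_finite : (linearExtensions S E).Finite := by
  refine Set.Finite.of_finite_image (f := fun T (p : S) => T p) ?_ fun T hT T' hT' he => ?_
  · refine (Set.Finite.pi (t := fun _ => Set.Iic #S) fun _ => Set.finite_Iic _).subset ?_
    rintro _ ⟨T, hT, rfl⟩ p -
    exact (hT.1.1.mapsTo p.2).2
  · funext p
    by_cases hp : p ∈ S
    · exact congrFun he ⟨p, hp⟩
    · rw [hT.1.2 p hp, hT'.1.2 p hp]

end PPartitions

section Moebius

variable {M : Type*}

lemma eq_of_sum_powerset_eq {α : Type*} [DecidableEq α] [AddCancelCommMonoid M]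
    {a b : Finset α → M} (h : ∀ D : Finset α, ∑ E ∈ D.powerset, a E = ∑ E ∈ D.powerset, b E)
    (D : Finset α) : a D = b D := by
  induction D using Finset.strongInduction with
  | H D ih =>
    have hD := h D
    rw [← add_sum_erase _ _ (mem_powerset_self D), ← add_sum_erase _ _ (mem_powerset_self D),
      sum_congr rfl fun E hE => ih E ?_] at hD
    · exact add_right_cancel hD
    · rw [mem_erase, mem_powerset] at hE
      exact hE.2.ssubset_of_ne hE.1

lemma sum_comp_eq_of_card_filter_subset_eq [AddCommMonoid M] {X : Type*} (s : Finset X)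
    {d d' : X → Finset ℕ} (h : ∀ D, #{x ∈ s | d x ⊆ D} = #{x ∈ s | d' x ⊆ D})
    (g : Finset ℕ → M) : ∑ x ∈ s, g (d x) = ∑ x ∈ s, g (d' x) := by
  have hfiber : ∀ D, #{x ∈ s | d x = D} = #{x ∈ s | d' x = D} :=
    eq_of_sum_powerset_eq fun D => by
      simp only [sum_card_fiberwise_eq_card_filter, mem_powerset, h]
  have himage : s.image d = s.image d' := by
    ext D
    rw [mem_image, mem_image, ← filter_nonempty_iff, ← filter_nonempty_iff, ← card_pos,
      ← card_pos, hfiber]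
  rw [sum_comp, sum_comp, himage]
  exact sum_congr rfl fun D _ => by rw [hfiber]

end Moebius

/-- By Möbius inversion over subsets it suffices to count linear extensions with descents in a
given `D`; these are in bijection with `partitions`, which only see the orientation of the edges. -/
theorem finsum_descents_eq_of_orientation {β δ δ' M : Type*} [DecidableEq β] [LinearOrder δ]
    [LinearOrder δ'] [AddCommMonoid M] {S : Finset β} {E : β → β → Prop} {κ : β → δ}
    {κ' : β → δ'} (hκ : Set.InjOn κ S) (hκ' : Set.InjOn κ' S)
    (horient : ∀ p ∈ S, ∀ q ∈ S, E p q → (κ p < κ q ↔ κ' p < κ' q)) (g : Finset ℕ → M) :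
    ∑ᶠ T ∈ linearExtensions S E, g (descents S κ T) =
      ∑ᶠ T ∈ linearExtensions S E, g (descents S κ' T) := by
  rw [finsum_mem_eq_finite_toFinset_sum _ linearExtensions_finite,
    finsum_mem_eq_finite_toFinset_sum _ linearExtensions_finite]
  refine sum_comp_eq_of_card_filter_subset_eq _ (fun D => ?_) g
  rw [← Set.ncard_coe_finset, ← Set.ncard_coe_finset, coe_filter, coe_filter]
  simp only [Set.Finite.mem_toFinset]
  rw [ncard_descents_subset_eq hκ, ncard_descents_subset_eq hκ', partitions_congr horient]

section Diagram

variable {α : List ℕ}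

lemma le_maxPart {a : ℕ} (h : a ∈ α) : a ≤ maxPart α := by
  induction α with
  | nil => simp at h
  | cons b l ih =>
    rcases List.mem_cons.1 h with rfl | h
    · exact le_max_left _ _
    · exact (ih h).trans (le_max_right _ _)

lemma part_le_maxPart (r : ℕ) : part α r ≤ maxPart α := by
  rw [part, List.getD_eq_getElem?_getD]
  cases h : α[r - 1]? with
  | none => exact Nat.zero_le _
  | some a => exact le_maxPart (List.mem_of_getElem? h)

lemma mem_cd_s3 {c r : ℕ} : (c, r) ∈ cd α ↔ 1 ≤ c ∧ c ≤ part α r ∧ 1 ≤ r ∧ r ≤ α.length := by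
  simp only [cd, mem_filter, mem_product, mem_Icc]
  exact ⟨fun ⟨⟨⟨h1, _⟩, h3, h4⟩, h5⟩ => ⟨h1, h5, h3, h4⟩,
    fun ⟨h1, h2, h3, h4⟩ => ⟨⟨⟨h1, h2.trans (part_le_maxPart r)⟩, h3, h4⟩, h2⟩⟩

lemma sum_range_getD_s3 (l : List ℕ) : ∑ j ∈ range l.length, l.getD j 0 = l.sum := by
  induction l with
  | nil => simp
  | cons a l ih =>
    rw [List.length_cons, sum_range_succ', List.sum_cons, ← ih, add_comm]
    rfl

lemma card_cd_s3 : #(cd α) = α.sum := by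
  rw [card_eq_sum_card_fiberwise (f := Prod.snd) (t := Icc 1 α.length) fun p hp => by
    rw [mem_coe, mem_Icc]
    exact ⟨(mem_cd_s3.1 hp).2.2.1, (mem_cd_s3.1 hp).2.2.2⟩]
  have hrow : ∀ r ∈ Icc 1 α.length, {p ∈ cd α | p.2 = r} = (Icc 1 (part α r)).image (·, r) := by
    intro r hr
    ext ⟨c, r'⟩
    simp only [mem_filter, mem_image, mem_Icc, mem_cd_s3, Prod.mk.injEq] at hr ⊢
    constructor
    · rintro ⟨⟨h1, h2, -, -⟩, rfl⟩
      exact ⟨c, ⟨h1, h2⟩, rfl, rfl⟩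
    · rintro ⟨c, hc, rfl, rfl⟩
      exact ⟨⟨hc.1, hc.2, hr⟩, rfl⟩
  rw [sum_congr rfl fun r hr => by
    rw [hrow r hr, card_image_of_injective _ (Prod.mk_left_injective r), Nat.card_Icc,
      Nat.add_sub_cancel]]
  rw [← Ico_add_one_right_eq_Icc, sum_Ico_eq_sum_range, Nat.add_sub_cancel, ← sum_range_getD_s3]
  simp only [part, Nat.add_sub_cancel_left]

lemma part_map_range (ρ : ℕ → ℕ) {L r : ℕ} (h1 : 1 ≤ r) (h2 : r ≤ L) :
    part ((List.range L).map fun j => ρ (j + 1)) r = ρ r := by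
  rw [part, List.getD_eq_getElem _ _ (by simp only [List.length_map, List.length_range]; omega),
    List.getElem_map, List.getElem_range, Nat.sub_add_cancel h1]

lemma eq_Icc_card_of_pred_mem {A : Finset ℕ} (hpos : ∀ a ∈ A, 1 ≤ a)
    (hpred : ∀ a, a + 1 ∈ A → 1 ≤ a → a ∈ A) : A = Icc 1 #A := by
  rcases A.eq_empty_or_nonempty with rfl | hne
  · rfl
  have hdown : ∀ d b, 1 ≤ b → b + d ∈ A → b ∈ A := by
    intro d
    induction d with
    | zero => exact fun b _ h => h
    | succ d ih => exact fun b hb h => ih b hb (hpred _ (by rwa [← add_assoc] at h) (by omega))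
  have hA : A = Icc 1 (A.max' hne) := by
    ext a
    rw [mem_Icc]
    refine ⟨fun ha => ⟨hpos a ha, le_max' A a ha⟩, fun ⟨h1, h2⟩ => ?_⟩
    exact hdown (A.max' hne - a) a h1 (by rw [Nat.add_sub_cancel' h2]; exact max'_mem A hne)
  conv_rhs => rw [hA, Nat.card_Icc, Nat.add_sub_cancel]
  exact hA

lemma exists_isPeakComposition_eq_cd (X : Finset (ℕ × ℕ)) (hpos : ∀ p ∈ X, 1 ≤ p.1 ∧ 1 ≤ p.2)
    (hleft : ∀ c r, (c + 1, r) ∈ X → 1 ≤ c → (c, r) ∈ X)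
    (hdown : ∀ r, (1, r + 1) ∈ X → 1 ≤ r → (2, r) ∈ X) :
    ∃ β, IsPeakComposition #X β ∧ X = cd β := by
  set ρ : ℕ → ℕ := fun r => #(image Prod.fst {p ∈ X | p.2 = r})
  set L := #(image Prod.snd {p ∈ X | p.1 = 1})
  have hrow : ∀ c r, (c, r) ∈ X ↔ 1 ≤ c ∧ c ≤ ρ r := by
    intro c r
    have hmem : ∀ c, c ∈ image Prod.fst {p ∈ X | p.2 = r} ↔ (c, r) ∈ X := by simp
    rw [← hmem, ← mem_Icc,
      ← eq_Icc_card_of_pred_mem (by simpa [hmem] using fun c hc => (hpos _ hc).1)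
      fun c hc h1 => (hmem c).2 (hleft c r ((hmem _).1 hc) h1)]
  have hcol : ∀ r, (1, r) ∈ X ↔ 1 ≤ r ∧ r ≤ L := by
    intro r
    have hmem : ∀ r, r ∈ image Prod.snd {p ∈ X | p.1 = 1} ↔ (1, r) ∈ X := by simp
    rw [← hmem, ← mem_Icc,
      ← eq_Icc_card_of_pred_mem (by simpa [hmem] using fun r hr => (hpos _ hr).2)
      fun r hr h1 => (hmem r).2 (hleft 1 r (hdown r ((hmem _).1 hr) h1) le_rfl)]
  set β := (List.range L).map fun j => ρ (j + 1)
  have hX : X = cd β := by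
    ext ⟨c, r⟩
    rw [mem_cd_s3, hrow, List.length_map, List.length_range]
    constructor
    · rintro ⟨h1, h2⟩
      have hr := (hcol r).1 ((hrow 1 r).2 ⟨le_rfl, h1.trans h2⟩)
      exact ⟨h1, (part_map_range ρ hr.1 hr.2).symm ▸ h2, hr⟩
    · rintro ⟨h1, h2, hr⟩
      exact ⟨h1, part_map_range ρ hr.1 hr.2 ▸ h2⟩
  refine ⟨β, ⟨⟨fun a ha => ?_, by rw [← card_cd_s3, ← hX]⟩, fun i hi => ?_⟩, hX⟩
  · obtain ⟨j, hj, rfl⟩ := List.mem_map.1 ha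
    exact ((hrow 1 (j + 1)).1 ((hcol _).2 ⟨by omega, List.mem_range.1 hj⟩)).2
  · rw [List.length_map, List.length_range] at hi
    have h2 := (hrow 2 (i + 1)).1 (hdown (i + 1) ((hcol _).2 ⟨by omega, hi⟩) (by omega))
    rw [List.getD_eq_getElem _ _ (by simp only [β, List.length_map, List.length_range]; omega),
      List.getElem_map, List.getElem_range]
    exact h2.2

end Diagram

section Tableaux

def spitEdge (p q : ℕ × ℕ) : Prop :=
  q = (p.1 + 1, p.2) ∨ (p.1 = 2 ∧ q = (1, p.2 + 1))

variable {n : ℕ} {α : List ℕ} {T : ℕ × ℕ → ℕ}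

lemma isStandardFilling_iff : IsStandardFilling α T ↔ IsStandardLabeling (cd α) T := by
  rw [IsStandardLabeling, card_cd_s3]
  rfl

lemma two_mem_cd (hα : IsPeakComposition n α) {r : ℕ} (h1 : 1 ≤ r) (h2 : r + 1 ≤ α.length) :
    (2, r) ∈ cd α :=
  mem_cd_s3.2 ⟨by omega, hα.2 (r - 1) (by omega), h1, by omega⟩

/-- The boxes with entries `≤ T (1, r + 1)` form a peak composition diagram with a row `r + 1`,
so its row `r` has a second box. -/
lemma IsSPIT.apply_two_lt_apply_one_succ (hT : IsSPIT α T) {r : ℕ}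
    (h2 : (2, r) ∈ cd α) (h1 : (1, r + 1) ∈ cd α) : T (2, r) < T (1, r + 1) := by
  obtain ⟨hk1, hk2⟩ := hT.1.1.1.mapsTo h1
  obtain ⟨β, hβ, hcd⟩ := hT.2 _ hk1 hk2
  have h1β : (1, r + 1) ∈ cd β := hcd ▸ mem_filter.2 ⟨h1, le_rfl⟩
  have h2β := two_mem_cd hβ (mem_cd_s3.1 h2).2.2.1 (mem_cd_s3.1 h1β).2.2.2
  rw [← hcd, mem_filter] at h2β
  refine h2β.2.lt_of_ne fun he => ?_
  simpa using hT.1.1.1.injOn h2 h1 he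

lemma peakCond_of_apply_two_lt_apply_one_succ_s3 (hα : IsPeakComposition n α)
    (hT : IsStandardFilling α T) (hrow : RowsIncrease α T)
    (hcol : ∀ r, (2, r) ∈ cd α → (1, r + 1) ∈ cd α → T (2, r) < T (1, r + 1)) :
    PeakCond α T := by
  intro k _ hk
  have hleft : ∀ c r, (c + 1, r) ∈ {p ∈ cd α | T p ≤ k} → 1 ≤ c →
      (c, r) ∈ {p ∈ cd α | T p ≤ k} := by
    intro c r hp hc
    obtain ⟨hp, hle⟩ := mem_filter.1 hp
    obtain ⟨-, h2, h3, h4⟩ := mem_cd_s3.1 hp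
    have hq : (c, r) ∈ cd α := mem_cd_s3.2 ⟨hc, by omega, h3, h4⟩
    exact mem_filter.2 ⟨hq, (hrow c r hq hp).le.trans hle⟩
  have hdown : ∀ r, (1, r + 1) ∈ {p ∈ cd α | T p ≤ k} → 1 ≤ r →
      (2, r) ∈ {p ∈ cd α | T p ≤ k} := by
    intro r hp hr
    obtain ⟨hp, hle⟩ := mem_filter.1 hp
    have hq := two_mem_cd hα hr (mem_cd_s3.1 hp).2.2.2
    exact mem_filter.2 ⟨hq, (hcol r hq hp).le.trans hle⟩
  obtain ⟨β, hβ, hX⟩ := exists_isPeakComposition_eq_cd _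
    (fun p hp => ⟨(mem_cd_s3.1 (mem_filter.1 hp).1).1, (mem_cd_s3.1 (mem_filter.1 hp).1).2.2.1⟩)
    hleft hdown
  rw [(isStandardFilling_iff.1 hT).card_filter_le (by rwa [card_cd_s3])] at hβ
  exact ⟨β, hβ, hX⟩

theorem SPITset_eq_linearExtensions (hα : IsPeakComposition n α) :
    SPITset α = linearExtensions (cd α) spitEdge := by
  ext T
  refine ⟨fun hT => ⟨isStandardFilling_iff.1 hT.1.1, ?_⟩, fun hT => ?_⟩
  · rintro ⟨c, r⟩ hp q hq (rfl | ⟨rfl, rfl⟩)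
    · exact hT.1.2.1 c r hp hq
    · exact hT.apply_two_lt_apply_one_succ hp hq
  · have hrow : RowsIncrease α T := fun c r hp hq => hT.2 _ hp _ hq (Or.inl rfl)
    have hcol : ∀ r, (2, r) ∈ cd α → (1, r + 1) ∈ cd α → T (2, r) < T (1, r + 1) :=
      fun r hp hq => hT.2 _ hp _ hq (Or.inr ⟨rfl, rfl⟩)
    have hstd := isStandardFilling_iff.2 hT.1
    refine ⟨⟨hstd, hrow, fun r hp hq => ?_⟩,
      peakCond_of_apply_two_lt_apply_one_succ_s3 hα hstd hrow hcol⟩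
    have h2 := two_mem_cd hα (mem_cd_s3.1 hp).2.2.1 (mem_cd_s3.1 hq).2.2.2
    exact (hrow 1 r hp h2).trans (hcol r h2 hq)

end Tableaux

section ReadingWords

lemma _root_.List.idxOf_map_of_injOn {β : Type*} [DecidableEq β] {l : List β} {T : β → ℕ}
    (hT : Set.InjOn T {p | p ∈ l}) {p : β} (hp : p ∈ l) : (l.map T).idxOf (T p) = l.idxOf p := by
  induction l with
  | nil => simp at hp
  | cons a l ih =>
    by_cases hpa : p = a
    · subst hpa
      simp
    · have hTpa : T a ≠ T p := fun he => hpa (hT (by simp [List.mem_cons.1 hp]) (by simp) he.symm)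
      rw [List.map_cons, List.idxOf_cons_ne _ hTpa, List.idxOf_cons_ne _ (Ne.symm hpa),
        ih (hT.mono fun x hx => List.mem_cons_of_mem a hx) ((List.mem_cons.1 hp).resolve_left hpa)]

lemma _root_.List.Pairwise.idxOf_lt_idxOf_iff {β δ : Type*} [DecidableEq β] [LinearOrder δ]
    {l : List β} {κ : β → δ} (hl : l.Pairwise (κ · < κ ·)) {p q : β} (hp : p ∈ l) (hq : q ∈ l) :
    l.idxOf p < l.idxOf q ↔ κ p < κ q := by
  have hlen : ∀ {x}, x ∈ l → l.idxOf x < l.length := List.idxOf_lt_length_of_mem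
  have hsorted : ∀ {x y}, x ∈ l → y ∈ l → l.idxOf x < l.idxOf y → κ x < κ y := fun hx hy h => by
    simpa [List.getElem_idxOf (hlen hx), List.getElem_idxOf (hlen hy)] using
      List.pairwise_iff_getElem.1 hl _ _ (hlen hx) (hlen hy) h
  refine ⟨hsorted hp hq, fun hκ => lt_of_not_ge fun hle => ?_⟩
  rcases hle.lt_or_eq with h | h
  · exact (hsorted hq hp h).not_gt hκ
  · rw [List.idxOf_inj hq] at h
    exact hκ.ne (congrArg κ h.symm)

lemma desWord_map_eq_descents {β δ : Type*} [DecidableEq β] [LinearOrder δ] {l : List β}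
    {κ : β → δ} {T : β → ℕ} (hl : l.Pairwise (κ · < κ ·)) (hT : Set.InjOn T l.toFinset) :
    DesWord (l.map T) = descents l.toFinset κ T := by
  replace hT : Set.InjOn T {p | p ∈ l} := hT.mono fun p hp => List.mem_toFinset.2 hp
  ext i
  simp only [DesWord, descents, mem_filter, mem_image, List.mem_toFinset, List.mem_map]
  constructor
  · rintro ⟨⟨p, hp, rfl⟩, ⟨q, hq, hqp⟩, hidx⟩
    rw [← hqp, List.idxOf_map_of_injOn hT hq, List.idxOf_map_of_injOn hT hp,
      hl.idxOf_lt_idxOf_iff hq hp] at hidx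
    exact ⟨p, ⟨hp, q, hq, hqp, hidx⟩, rfl⟩
  · rintro ⟨p, ⟨hp, q, hq, hqp, hκ⟩, rfl⟩
    refine ⟨⟨p, hp, rfl⟩, ⟨q, hq, hqp⟩, ?_⟩
    rw [← hqp, List.idxOf_map_of_injOn hT hq, List.idxOf_map_of_injOn hT hp,
      hl.idxOf_lt_idxOf_iff hq hp]
    exact hκ

/-- The row reading word reads the boxes in increasing order of this key. -/
def rowKey (p : ℕ × ℕ) : ℕᵒᵈ ×ₗ ℕ := toLex (OrderDual.toDual p.2, p.1)

def columnKey (p : ℕ × ℕ) : ℕ ×ₗ ℕ := toLex p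

def rowReadingBoxes (α : List ℕ) : List (ℕ × ℕ) :=
  ((List.range α.length).reverse.map fun j =>
    (List.range (part α (j + 1))).map fun i => (i + 1, j + 1)).flatten

def columnReadingBoxes (α : List ℕ) : List (ℕ × ℕ) :=
  ((List.range (maxPart α)).map fun i =>
    ((List.range α.length).filter fun j => decide (i + 1 ≤ part α (j + 1))).map
      fun j => (i + 1, j + 1)).flatten

variable {α : List ℕ} {T : ℕ × ℕ → ℕ}

lemma wR_eq_map : wR α T = (rowReadingBoxes α).map T := by
  simp [wR, rowReadingBoxes, List.map_flatten, Function.comp_def]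

lemma wC_eq_map : wC α T = (columnReadingBoxes α).map T := by
  simp [wC, colList, columnReadingBoxes, List.map_flatten, Function.comp_def]

lemma toFinset_rowReadingBoxes : (rowReadingBoxes α).toFinset = cd α := by
  ext ⟨c, r⟩
  simp only [rowReadingBoxes, List.mem_toFinset, List.mem_flatten, List.mem_map, List.mem_reverse,
    List.mem_range, mem_cd_s3, Prod.mk.injEq, exists_exists_and_eq_and]
  constructor
  · rintro ⟨j, hj, i, hi, rfl, rfl⟩
    omega
  · rintro ⟨h1, h2, h3, h4⟩
    refine ⟨r - 1, by omega, c - 1, ?_, by omega, by omega⟩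
    rw [Nat.sub_add_cancel h3]
    omega

lemma toFinset_columnReadingBoxes : (columnReadingBoxes α).toFinset = cd α := by
  ext ⟨c, r⟩
  simp only [columnReadingBoxes, List.mem_toFinset, List.mem_flatten, List.mem_map,
    List.mem_filter, List.mem_range, decide_eq_true_eq, mem_cd_s3, Prod.mk.injEq,
    exists_exists_and_eq_and]
  constructor
  · rintro ⟨i, hi, j, ⟨hj, hij⟩, rfl, rfl⟩
    omega
  · rintro ⟨h1, h2, h3, h4⟩
    refine ⟨c - 1, ?_, r - 1, ⟨by omega, ?_⟩, by omega, by omega⟩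
    · have := part_le_maxPart (α := α) r
      omega
    · rwa [Nat.sub_add_cancel h1, Nat.sub_add_cancel h3]

lemma pairwise_rowReadingBoxes : (rowReadingBoxes α).Pairwise (rowKey · < rowKey ·) := by
  simp only [rowReadingBoxes, List.pairwise_flatten, List.pairwise_map, List.pairwise_reverse,
    List.mem_map, rowKey, Prod.Lex.toLex_lt_toLex]
  refine ⟨?_, ?_⟩
  · rintro _ ⟨j, -, rfl⟩
    exact List.pairwise_map.2 (List.pairwise_lt_range.imp fun h => Or.inr ⟨rfl, by omega⟩)
  · refine List.pairwise_lt_range.imp fun hjk => ?_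
    rintro _ ⟨i, -, rfl⟩ _ ⟨i', -, rfl⟩
    exact Or.inl (OrderDual.toDual_lt_toDual.2 (by omega))

lemma pairwise_columnReadingBoxes :
    (columnReadingBoxes α).Pairwise (columnKey · < columnKey ·) := by
  simp only [columnReadingBoxes, List.pairwise_flatten, List.pairwise_map, List.mem_map,
    columnKey, Prod.Lex.toLex_lt_toLex]
  refine ⟨?_, ?_⟩
  · rintro _ ⟨i, -, rfl⟩
    exact List.pairwise_map.2
      ((List.pairwise_lt_range.filter _).imp fun h => Or.inr ⟨rfl, by omega⟩)
  · refine List.pairwise_lt_range.imp fun hik => ?_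
    rintro _ ⟨j, -, rfl⟩ _ ⟨j', -, rfl⟩
    exact Or.inl (by omega)

lemma desWord_wR (hT : Set.InjOn T (cd α)) : DesWord (wR α T) = descents (cd α) rowKey T := by
  rw [wR_eq_map, desWord_map_eq_descents pairwise_rowReadingBoxes, toFinset_rowReadingBoxes]
  rwa [toFinset_rowReadingBoxes]

lemma desWord_wC (hT : Set.InjOn T (cd α)) : DesWord (wC α T) = descents (cd α) columnKey T := by
  rw [wC_eq_map, desWord_map_eq_descents pairwise_columnReadingBoxes,
    toFinset_columnReadingBoxes]
  rwa [toFinset_columnReadingBoxes]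

lemma columnKey_injective : Function.Injective columnKey := toLex.injective

lemma rowKey_injective : Function.Injective rowKey := fun p q h => by
  simp only [rowKey, EmbeddingLike.apply_eq_iff_eq, Prod.mk.injEq] at h
  exact Prod.ext h.2 h.1

/-- Both reading orders go left to right along rows and reverse the edges `(2, r) → (1, r + 1)`. -/
lemma columnKey_lt_iff_rowKey_lt {p q : ℕ × ℕ} (h : spitEdge p q) :
    columnKey p < columnKey q ↔ rowKey p < rowKey q := by
  rcases p with ⟨c, r⟩
  rcases h with rfl | ⟨rfl, rfl⟩
  · simp [columnKey, rowKey, Prod.Lex.toLex_lt_toLex]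
  · simp only [columnKey, rowKey, Prod.Lex.toLex_lt_toLex, OrderDual.toDual_lt_toDual]
    omega

end ReadingWords

/-- For every peak composition `α` of `n`, the quasisymmetric Schur
`Q`-function equals the `K`-generating function of standard peak immaculate tableaux
computed with the row reading word `w_r` in place of the column reading word `w_c`. -/
theorem QSQ_eq_row_reading (n : ℕ) (α : List ℕ) (hα : IsPeakComposition n α) :
    QSQ n α = ∑ᶠ T ∈ SPITset α, Kqs n (compOf n (PeakSet (DesWord (wR α T)))) := by
  rw [QSQ, SPITset_eq_linearExtensions hα]
  calc ∑ᶠ T ∈ linearExtensions (cd α) spitEdge, Kqs n (compOf n (PeakSet (DesWord (wC α T))))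
      = ∑ᶠ T ∈ linearExtensions (cd α) spitEdge,
          Kqs n (compOf n (PeakSet (descents (cd α) columnKey T))) :=
        finsum_mem_congr rfl fun T hT => by rw [desWord_wC hT.1.1.injOn]
    _ = ∑ᶠ T ∈ linearExtensions (cd α) spitEdge,
          Kqs n (compOf n (PeakSet (descents (cd α) rowKey T))) :=
        finsum_descents_eq_of_orientation (E := spitEdge) columnKey_injective.injOn
          rowKey_injective.injOn (fun _ _ _ _ => columnKey_lt_iff_rowKey_lt)
          fun D => Kqs n (compOf n (PeakSet D))
    _ = _ := finsum_mem_congr rfl fun T hT => by rw [desWord_wR hT.1.1.injOn]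

end PaperSPIT
end
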